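/- Fix γ > 0 and assume the kernel and reparameterization regularity: k_θ(x|z) + ‖∇_{(θ,x,z)} k_θ(x|z)‖ ≤ B_k, ‖∇_x k_θ(x|z) − ∇_x k_{θ'}(x'|z')‖ ≤ K_k ‖(θ, x, z) − (θ', x', z')‖, and ‖∇_{(θ,z)} φ_θ(z, ε)‖_F ≤ a_φ‖ε‖ + b_φ. Define Γ^γ_{θ,r}(z, ε) := γ ∇_x q_{θ,r}(x) / (q_{θ,r}(x) + γ)² evaluated at x = φ_θ(z, ε), where q_{θ,r}(x) := ∫ k_θ(x|z) r(dz). Then: (i) ‖Γ^γ_{θ,r}(z, ε)‖ ≤ B_k/γ for all (θ, r, z, ε); and (ii) there exist a_Γ, b_Γ > 0 such that ‖Γ^γ_{θ,r}(z, ε) − Γ^γ_{θ',r'}(z', ε)‖ ≤ (a_Γ‖ε‖ + b_Γ)(‖(θ, z) − (θ', z')‖ + W₁(r, r')) for all θ, θ', z, z', ε and all probability measures r, r' with finite first moment. -/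

import Mathlib

open MeasureTheory Filter Topology
open scoped ENNReal NNReal

/-- Shorthand for Euclidean space `ℝ^n`. -/
abbrev Esp (n : ℕ) : Type := EuclideanSpace ℝ (Fin n)

/-- The Wasserstein-1 cost between two measures: the infimum over couplings `π` (measures on the
product with the given marginals) of `∫ ‖z − z'‖ dπ(z, z')`. -/
noncomputable def W1 {E : Type*} [MeasurableSpace E] [NormedAddCommGroup E]
    (r r' : Measure E) : ℝ≥0∞ :=
  ⨅ π : {π : Measure (E × E) // π.map Prod.fst = r ∧ π.map Prod.snd = r'},
    ∫⁻ p, (‖p.1 - p.2‖₊ : ℝ≥0∞) ∂π.1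

/-- The semi-implicit density `q_{θ,r}(x) = ∫ k_θ(x|z) r(dz)`. -/
noncomputable def qdens {dθ dx dz : ℕ} (k : Esp dθ → Esp dx → Esp dz → ℝ)
    (θ : Esp dθ) (r : Measure (Esp dz)) (x : Esp dx) : ℝ :=
  ∫ z, k θ x z ∂r

/-- The extra drift term `Γ^γ_{θ,r}(z, ε) = γ ∇_x q_{θ,r}(x)/(q_{θ,r}(x) + γ)²` at
`x = φ_θ(z, ε)`. -/
noncomputable def GammaDrift {dθ dx dz : ℕ} (γ : ℝ) (k : Esp dθ → Esp dx → Esp dz → ℝ)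
    (φ : Esp dθ → Esp dz → Esp dx → Esp dx)
    (θ : Esp dθ) (r : Measure (Esp dz)) (z : Esp dz) (ε : Esp dx) : Esp dx :=
  (γ / (qdens k θ r (φ θ z ε) + γ) ^ 2) • gradient (fun x => qdens k θ r x) (φ θ z ε)

/-!
Write `q = q_{θ,r}(x)` and `u = ∇ₓ q_{θ,r}(x)`, so that `Γ = γ u / (q + γ)²`. Since `q ≥ 0`,
the factor `γ / (q + γ)²` is at most `1/γ` and is `2/γ²`-Lipschitz in `q`; differentiating
under the integral, `u = ∫ ∇ₓ k_θ(x|z) r(dz)` has norm at most `B_k`. Both `q` and `u` are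
integrals against `r` of bounded functions of `(θ, x, z)` that are Lipschitz with constant
`B_k`, resp. `K_k`: moving `(θ, x)` costs that constant times the displacement, and replacing
`r` by `r'` costs it times `W₁(r, r')` after integrating over a near-optimal coupling. Finally,
by the mean value inequality `x = φ_θ(z, ε)` moves by at most
`(a_φ‖ε‖ + b_φ)‖(θ, z) − (θ', z')‖`.
-/

lemma div_add_sq_le_inv {γ q : ℝ} (hγ : 0 < γ) (hq : 0 ≤ q) : γ / (q + γ) ^ 2 ≤ γ⁻¹ :=
  calc γ / (q + γ) ^ 2 ≤ γ / γ ^ 2 := by gcongr; linarith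
    _ = γ⁻¹ := by field_simp

lemma abs_div_sq_sub_div_sq_le {γ a b : ℝ} (hγ : 0 < γ) (ha : γ ≤ a) (hb : γ ≤ b) :
    |γ / a ^ 2 - γ / b ^ 2| ≤ 2 / γ ^ 2 * |a - b| := by
  have ha₀ : 0 < a := hγ.trans_le ha
  have hb₀ : 0 < b := hγ.trans_le hb
  have hsplit :
      γ / a ^ 2 - γ / b ^ 2 = γ * (b - a) * (1 / (a * b ^ 2) + 1 / (a ^ 2 * b)) := by
    field_simp
    ring
  have hsum : 1 / (a * b ^ 2) + 1 / (a ^ 2 * b) ≤ 2 / γ ^ 3 := by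
    have h₁ : 1 / (a * b ^ 2) ≤ 1 / γ ^ 3 := by
      gcongr
      rw [pow_succ']
      gcongr
    have h₂ : 1 / (a ^ 2 * b) ≤ 1 / γ ^ 3 := by
      gcongr
      rw [pow_succ]
      gcongr
    linarith [show 2 / γ ^ 3 = 1 / γ ^ 3 + 1 / γ ^ 3 by ring]
  rw [hsplit, abs_mul, abs_mul, abs_of_pos hγ,
    abs_of_pos (show 0 < 1 / (a * b ^ 2) + 1 / (a ^ 2 * b) by positivity), abs_sub_comm b a]
  calc γ * |a - b| * (1 / (a * b ^ 2) + 1 / (a ^ 2 * b)) ≤ γ * |a - b| * (2 / γ ^ 3) := by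
        gcongr
    _ = 2 / γ ^ 2 * |a - b| := by field_simp

lemma norm_smul_div_add_sq_sub_smul_div_add_sq_le {E : Type*} [NormedAddCommGroup E]
    [NormedSpace ℝ E] {γ q q' : ℝ} (hγ : 0 < γ) (hq : 0 ≤ q) (hq' : 0 ≤ q') (u v : E) :
    ‖(γ / (q + γ) ^ 2) • u - (γ / (q' + γ) ^ 2) • v‖ ≤
      γ⁻¹ * ‖u - v‖ + 2 / γ ^ 2 * |q - q'| * ‖v‖ := by
  have hdecomp : (γ / (q + γ) ^ 2) • u - (γ / (q' + γ) ^ 2) • v =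
      (γ / (q + γ) ^ 2) • (u - v) + (γ / (q + γ) ^ 2 - γ / (q' + γ) ^ 2) • v := by
    rw [smul_sub, sub_smul]; abel
  have hcoeff : |γ / (q + γ) ^ 2 - γ / (q' + γ) ^ 2| ≤ 2 / γ ^ 2 * |q - q'| := by
    simpa using
      abs_div_sq_sub_div_sq_le hγ (le_add_of_nonneg_left hq) (le_add_of_nonneg_left hq')
  rw [hdecomp]
  refine (norm_add_le _ _).trans (add_le_add ?_ ?_) <;> rw [norm_smul, Real.norm_eq_abs]
  · rw [abs_of_pos (by positivity)]
    gcongr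
    exact div_add_sq_le_inv hγ hq
  · gcongr

section Wasserstein

variable {X : Type*} [NormedAddCommGroup X] [MeasurableSpace X]

lemma W1_ne_top [OpensMeasurableSpace X] {r r' : Measure X} [IsProbabilityMeasure r]
    [IsProbabilityMeasure r'] (hr : (∫⁻ w, (‖w‖₊ : ℝ≥0∞) ∂r) < ⊤)
    (hr' : (∫⁻ w, (‖w‖₊ : ℝ≥0∞) ∂r') < ⊤) : W1 r r' ≠ ⊤ := by
  have hfst : (r.prod r').map Prod.fst = r := by simp
  have hsnd : (r.prod r').map Prod.snd = r' := by simp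
  have hmeas : Measurable fun w : X => (‖w‖₊ : ℝ≥0∞) := measurable_nnnorm.coe_nnreal_ennreal
  refine (lt_of_le_of_lt (iInf_le _ ⟨r.prod r', hfst, hsnd⟩) ?_).ne
  calc ∫⁻ p, (‖p.1 - p.2‖₊ : ℝ≥0∞) ∂(r.prod r')
      ≤ ∫⁻ p, ((‖p.1‖₊ : ℝ≥0∞) + ‖p.2‖₊) ∂(r.prod r') :=
        lintegral_mono fun p =>
          (ENNReal.coe_le_coe.2 (nnnorm_sub_le p.1 p.2)).trans_eq (ENNReal.coe_add _ _)
    _ = (∫⁻ w, (‖w‖₊ : ℝ≥0∞) ∂((r.prod r').map Prod.fst)) +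
          ∫⁻ w, (‖w‖₊ : ℝ≥0∞) ∂((r.prod r').map Prod.snd) := by
        rw [lintegral_add_left measurable_fst.nnnorm.coe_nnreal_ennreal,
          lintegral_map hmeas measurable_fst, lintegral_map hmeas measurable_snd]
    _ = (∫⁻ w, (‖w‖₊ : ℝ≥0∞) ∂r) + ∫⁻ w, (‖w‖₊ : ℝ≥0∞) ∂r' := by rw [hfst, hsnd]
    _ < ⊤ := ENNReal.add_lt_top.2 ⟨hr, hr'⟩

lemma enorm_integral_sub_integral_le_of_coupling {E : Type*} [NormedAddCommGroup E]
    [NormedSpace ℝ E] [OpensMeasurableSpace X] [SecondCountableTopology X] {f : X → E}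
    {L : ℝ≥0} {C : ℝ} (hf : LipschitzWith L f) (hbdd : ∀ w, ‖f w‖ ≤ C)
    {π : Measure (X × X)} [IsFiniteMeasure π] :
    ‖∫ w, f w ∂(π.map Prod.fst) - ∫ w, f w ∂(π.map Prod.snd)‖ₑ ≤
      L * ∫⁻ p, (‖p.1 - p.2‖₊ : ℝ≥0∞) ∂π := by
  have hf_meas : ∀ μ : Measure X, AEStronglyMeasurable f μ :=
    fun _ => hf.continuous.aestronglyMeasurable
  have hint : ∀ g : X × X → X, Measurable g → Integrable (fun p => f (g p)) π := fun g hg =>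
    (integrable_const C).mono' ((hf_meas _).comp_measurable hg)
      (Eventually.of_forall fun p => hbdd (g p))
  rw [integral_map measurable_fst.aemeasurable (hf_meas _),
    integral_map measurable_snd.aemeasurable (hf_meas _),
    ← integral_sub (hint _ measurable_fst) (hint _ measurable_snd),
    ← lintegral_const_mul' _ _ ENNReal.coe_ne_top]
  refine (enorm_integral_le_lintegral_enorm _).trans (lintegral_mono fun p => ?_)
  rw [← edist_eq_enorm_sub, ← nndist_eq_nnnorm, ← edist_nndist]
  exact hf p.1 p.2

/-- The easy half of Kantorovich–Rubinstein duality. -/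
lemma norm_integral_sub_integral_le_mul_W1 {E : Type*} [NormedAddCommGroup E]
    [NormedSpace ℝ E] [OpensMeasurableSpace X] [SecondCountableTopology X] {f : X → E}
    {L : ℝ≥0} {C : ℝ} (hf : LipschitzWith L f) (hbdd : ∀ w, ‖f w‖ ≤ C)
    {r r' : Measure X} [IsFiniteMeasure r] (hW : W1 r r' ≠ ⊤) :
    ‖∫ w, f w ∂r - ∫ w, f w ∂r'‖ ≤ L * (W1 r r').toReal := by
  have hcouplings :
      Nonempty {π : Measure (X × X) // π.map Prod.fst = r ∧ π.map Prod.snd = r'} := by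
    by_contra h
    exact hW (@iInf_of_empty _ _ _ (not_nonempty_iff.1 h) _)
  have henorm : ‖∫ w, f w ∂r - ∫ w, f w ∂r'‖ₑ ≤ L * W1 r r' := by
    rw [W1, ENNReal.mul_iInf (by simp)]
    refine le_iInf fun ⟨π, hπ₁, hπ₂⟩ => ?_
    have : IsFiniteMeasure (π.map Prod.fst) := hπ₁ ▸ inferInstance
    have : IsFiniteMeasure π := Measure.isFiniteMeasure_of_map measurable_fst.aemeasurable
    simpa only [hπ₁, hπ₂] using enorm_integral_sub_integral_le_of_coupling hf hbdd (π := π)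
  simpa [ENNReal.toReal_mul] using ENNReal.toReal_mono (by finiteness) henorm

end Wasserstein

lemma norm_integral_sub_integral_le_of_lipschitzWith {X P E : Type*} [NormedAddCommGroup X]
    [MeasurableSpace X] [OpensMeasurableSpace X] [SecondCountableTopology X]
    [PseudoMetricSpace P] [NormedAddCommGroup E] [NormedSpace ℝ E] {G : P → X → E} {L : ℝ≥0} {C : ℝ}
    (hG_param : ∀ w, LipschitzWith L (G · w)) (hG : ∀ p, LipschitzWith L (G p))
    (hbdd : ∀ p w, ‖G p w‖ ≤ C) {r r' : Measure X} [IsProbabilityMeasure r]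
    (hW : W1 r r' ≠ ⊤) (p p' : P) :
    ‖∫ w, G p w ∂r - ∫ w, G p' w ∂r'‖ ≤ L * (dist p p' + (W1 r r').toReal) := by
  have hint : ∀ p, Integrable (G p) r := fun p =>
    (integrable_const C).mono' (hG p).continuous.aestronglyMeasurable
      (Eventually.of_forall (hbdd p))
  have hparam : ‖∫ w, G p w ∂r - ∫ w, G p' w ∂r‖ ≤ L * dist p p' := by
    rw [← integral_sub (hint p) (hint p')]
    simpa using norm_integral_le_of_norm_le_const (μ := r) (C := L * dist p p')
      (Eventually.of_forall fun w => (dist_eq_norm _ _).symm.trans_le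
        ((hG_param w).dist_le_mul p p'))
  calc ‖∫ w, G p w ∂r - ∫ w, G p' w ∂r'‖
      ≤ ‖∫ w, G p w ∂r - ∫ w, G p' w ∂r‖ + ‖∫ w, G p' w ∂r - ∫ w, G p' w ∂r'‖ :=
        norm_sub_le_norm_sub_add_norm_sub _ _ _
    _ ≤ L * dist p p' + L * (W1 r r').toReal :=
        add_le_add hparam (norm_integral_sub_integral_le_mul_W1 (hG p') (hbdd p') hW)
    _ = L * (dist p p' + (W1 r r').toReal) := by ring

lemma hasGradientAt_integral_of_lipschitzWith {H Z : Type*} [NormedAddCommGroup H]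
    [InnerProductSpace ℝ H] [CompleteSpace H] [MeasurableSpace Z] {μ : Measure Z}
    [IsFiniteMeasure μ] {F : H → Z → ℝ} {L : ℝ≥0} {x : H}
    (hF_meas : ∀ y, AEStronglyMeasurable (F y) μ) (hF_int : Integrable (F x) μ)
    (hF'_meas : AEStronglyMeasurable (fun w => gradient (F · w) x) μ)
    (hF_lip : ∀ w, LipschitzWith L (F · w)) (hF_diff : ∀ w, DifferentiableAt ℝ (F · w) x) :
    HasGradientAt (fun y => ∫ w, F y w ∂μ) (∫ w, gradient (F · w) x ∂μ) x := by
  have h := (hasFDerivAt_integral_of_dominated_loc_of_lip (x₀ := x)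
    (bound := fun _ => (L : ℝ)) Filter.univ_mem (Eventually.of_forall hF_meas) hF_int
    ((InnerProductSpace.toDual ℝ H).continuous.comp_aestronglyMeasurable hF'_meas)
    (Eventually.of_forall fun w => by simpa using (hF_lip w).lipschitzOnWith (s := Set.univ))
    (integrable_const _)
    (Eventually.of_forall fun w => (hF_diff w).hasGradientAt.hasFDerivAt)).2
  have hcomm : ∫ w, InnerProductSpace.toDual ℝ H (gradient (F · w) x) ∂μ =
      InnerProductSpace.toDual ℝ H (∫ w, gradient (F · w) x ∂μ) :=
    (InnerProductSpace.toDual ℝ H).toLinearIsometry.integral_comp_comm _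
  rwa [hasGradientAt_iff_hasFDerivAt, ← hcomm]

lemma norm_gradient_eq_norm_fderiv {H : Type*} [NormedAddCommGroup H] [InnerProductSpace ℝ H]
    [CompleteSpace H] (f : H → ℝ) (x : H) : ‖gradient f x‖ = ‖fderiv ℝ f x‖ :=
  (InnerProductSpace.toDual ℝ H).symm.norm_map _

section LipschitzProd

variable {α β γ E : Type*} [PseudoEMetricSpace α] [PseudoEMetricSpace β] [PseudoEMetricSpace γ]
  [PseudoEMetricSpace E] {K : ℝ≥0} {f : α × β × γ → E}

lemma LipschitzWith.comp_prodMk_prodMk_right (hf : LipschitzWith K f) (c : γ) :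
    LipschitzWith K fun p : α × β => f (p.1, p.2, c) := by
  simpa [Function.comp_def] using hf.comp (LipschitzWith.prod_fst.prodMk
    ((LipschitzWith.prodMk_right c).comp LipschitzWith.prod_snd))

lemma LipschitzWith.comp_prodMk_prodMk_left (hf : LipschitzWith K f) (a : α) (b : β) :
    LipschitzWith K fun c : γ => f (a, b, c) := by
  simpa [Function.comp_def] using
    hf.comp ((LipschitzWith.prodMk_left a).comp (LipschitzWith.prodMk_left b))

end LipschitzProd

lemma dist_prodMk_le_of_norm_fderiv_le {Θ Z X : Type*} [NormedAddCommGroup Θ]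
    [NormedSpace ℝ Θ] [NormedAddCommGroup Z] [NormedSpace ℝ Z] [NormedAddCommGroup X]
    [NormedSpace ℝ X]
    {φ : Θ → Z → X} {M : ℝ} (hφ_diff : Differentiable ℝ fun q : Θ × Z => φ q.1 q.2)
    (hφ_bdd : ∀ q : Θ × Z, ‖fderiv ℝ (fun q : Θ × Z => φ q.1 q.2) q‖ ≤ M)
    (θ θ' : Θ) (z z' : Z) :
    dist (θ, φ θ z) (θ', φ θ' z') ≤ (M + 1) * ‖((θ, z) : Θ × Z) - (θ', z')‖ := by
  have hφ : ‖φ θ z - φ θ' z'‖ ≤ M * ‖((θ, z) : Θ × Z) - (θ', z')‖ :=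
    convex_univ.norm_image_sub_le_of_norm_fderiv_le (fun q _ => hφ_diff q)
      (fun q _ => hφ_bdd q) (Set.mem_univ (θ', z')) (Set.mem_univ (θ, z))
  have hθ : ‖θ - θ'‖ ≤ ‖((θ, z) : Θ × Z) - (θ', z')‖ :=
    norm_fst_le (((θ, z) : Θ × Z) - (θ', z'))
  rw [Prod.dist_eq, dist_eq_norm, dist_eq_norm]
  calc max ‖θ - θ'‖ ‖φ θ z - φ θ' z'‖ ≤ ‖θ - θ'‖ + ‖φ θ z - φ θ' z'‖ :=
        max_le_add_of_nonneg (norm_nonneg _) (norm_nonneg _)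
    _ ≤ (M + 1) * ‖((θ, z) : Θ × Z) - (θ', z')‖ := by linarith

structure IsRegularKernel {dθ dx dz : ℕ} (k : Esp dθ → Esp dx → Esp dz → ℝ) (Bk Kk : ℝ) :
    Prop where
  nonneg : ∀ θ x z, 0 ≤ k θ x z
  differentiable : Differentiable ℝ fun q : Esp dθ × Esp dx × Esp dz => k q.1 q.2.1 q.2.2
  add_norm_fderiv_le : ∀ θ x z,
    k θ x z + ‖fderiv ℝ (fun q : Esp dθ × Esp dx × Esp dz => k q.1 q.2.1 q.2.2) (θ, x, z)‖ ≤ Bk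
  norm_gradient_sub_le : ∀ θ θ' x x' z z',
    ‖gradient (fun y => k θ y z) x - gradient (fun y => k θ' y z') x'‖ ≤
      Kk * ‖((θ, x, z) : Esp dθ × Esp dx × Esp dz) - (θ', x', z')‖

namespace IsRegularKernel

variable {dθ dx dz : ℕ} {k : Esp dθ → Esp dx → Esp dz → ℝ} {Bk Kk : ℝ}

lemma bound_nonneg (hk : IsRegularKernel k Bk Kk) : 0 ≤ Bk :=
  (add_nonneg (hk.nonneg 0 0 0) (norm_nonneg _)).trans (hk.add_norm_fderiv_le 0 0 0)

lemma norm_le (hk : IsRegularKernel k Bk Kk) (θ : Esp dθ) (x : Esp dx) (z : Esp dz) :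
    ‖k θ x z‖ ≤ Bk := by
  rw [Real.norm_of_nonneg (hk.nonneg θ x z)]
  exact le_of_add_le_of_nonneg_left (hk.add_norm_fderiv_le θ x z) (norm_nonneg _)

lemma lipschitzWith_uncurry (hk : IsRegularKernel k Bk Kk) :
    LipschitzWith Bk.toNNReal fun q : Esp dθ × Esp dx × Esp dz => k q.1 q.2.1 q.2.2 :=
  lipschitzWith_of_nnnorm_fderiv_le hk.differentiable fun q => by
    rw [← NNReal.coe_le_coe, coe_nnnorm, Real.coe_toNNReal Bk hk.bound_nonneg]
    exact le_of_add_le_of_nonneg_right (hk.add_norm_fderiv_le q.1 q.2.1 q.2.2)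
      (hk.nonneg _ _ _)

lemma lipschitzWith_param (hk : IsRegularKernel k Bk Kk) (z : Esp dz) :
    LipschitzWith Bk.toNNReal fun p : Esp dθ × Esp dx => k p.1 p.2 z :=
  hk.lipschitzWith_uncurry.comp_prodMk_prodMk_right z

lemma lipschitzWith_latent (hk : IsRegularKernel k Bk Kk) (θ : Esp dθ) (x : Esp dx) :
    LipschitzWith Bk.toNNReal (k θ x) :=
  hk.lipschitzWith_uncurry.comp_prodMk_prodMk_left θ x

lemma norm_gradient_le (hk : IsRegularKernel k Bk Kk) (θ : Esp dθ) (x : Esp dx)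
    (z : Esp dz) : ‖gradient (fun y => k θ y z) x‖ ≤ Bk := by
  rw [norm_gradient_eq_norm_fderiv]
  simpa [Function.comp_def, hk.bound_nonneg] using
    norm_fderiv_le_of_lipschitz ℝ (x₀ := x)
      ((hk.lipschitzWith_param z).comp (LipschitzWith.prodMk_left θ))

lemma lipschitzWith_gradient_uncurry (hk : IsRegularKernel k Bk Kk) :
    LipschitzWith Kk.toNNReal fun q : Esp dθ × Esp dx × Esp dz =>
      gradient (fun y => k q.1 y q.2.2) q.2.1 :=
  LipschitzWith.of_dist_le_mul fun q q' => by
    rw [dist_eq_norm, dist_eq_norm]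
    exact (hk.norm_gradient_sub_le q.1 q'.1 q.2.1 q'.2.1 q.2.2 q'.2.2).trans
      (by gcongr; exact Real.le_coe_toNNReal Kk)

lemma hasGradientAt_qdens (hk : IsRegularKernel k Bk Kk) (θ : Esp dθ) (r : Measure (Esp dz))
    [IsProbabilityMeasure r] (x : Esp dx) :
    HasGradientAt (qdens k θ r) (∫ z, gradient (fun y => k θ y z) x ∂r) x :=
  hasGradientAt_integral_of_lipschitzWith
    (fun y => (hk.lipschitzWith_latent θ y).continuous.aestronglyMeasurable)
    ((integrable_const Bk).mono' (hk.lipschitzWith_latent θ x).continuous.aestronglyMeasurable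
      (Eventually.of_forall (hk.norm_le θ x)))
    (Continuous.aestronglyMeasurable
      (hk.lipschitzWith_gradient_uncurry.comp_prodMk_prodMk_left θ x).continuous)
    (fun z => (hk.lipschitzWith_param z).comp (LipschitzWith.prodMk_left θ))
    (fun z => (hk.differentiable _).comp x (f := fun y => (θ, y, z)) (by fun_prop))

lemma qdens_nonneg (hk : IsRegularKernel k Bk Kk) (θ : Esp dθ) (r : Measure (Esp dz))
    (x : Esp dx) : 0 ≤ qdens k θ r x :=
  integral_nonneg fun z => hk.nonneg θ x z

lemma norm_gradient_qdens_le (hk : IsRegularKernel k Bk Kk) (θ : Esp dθ)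
    (r : Measure (Esp dz)) [IsProbabilityMeasure r] (x : Esp dx) :
    ‖gradient (qdens k θ r) x‖ ≤ Bk := by
  rw [(hk.hasGradientAt_qdens θ r x).gradient]
  simpa using norm_integral_le_of_norm_le_const (μ := r)
    (Eventually.of_forall (hk.norm_gradient_le θ x))

lemma abs_qdens_sub_le (hk : IsRegularKernel k Bk Kk) {r r' : Measure (Esp dz)}
    [IsProbabilityMeasure r] (hW : W1 r r' ≠ ⊤) (θ θ' : Esp dθ) (x x' : Esp dx) :
    |qdens k θ r x - qdens k θ' r' x'| ≤ Bk * (dist (θ, x) (θ', x') + (W1 r r').toReal) := by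
  simpa [qdens, Real.coe_toNNReal _ hk.bound_nonneg] using
    norm_integral_sub_integral_le_of_lipschitzWith
      (G := fun p : Esp dθ × Esp dx => k p.1 p.2) hk.lipschitzWith_param
      (fun p => hk.lipschitzWith_latent p.1 p.2)
      (fun p => hk.norm_le p.1 p.2) hW (θ, x) (θ', x')

lemma norm_gradient_qdens_sub_le (hk : IsRegularKernel k Bk Kk) (hKk : 0 ≤ Kk)
    {r r' : Measure (Esp dz)} [IsProbabilityMeasure r] [IsProbabilityMeasure r']
    (hW : W1 r r' ≠ ⊤) (θ θ' : Esp dθ) (x x' : Esp dx) :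
    ‖gradient (qdens k θ r) x - gradient (qdens k θ' r') x'‖ ≤
      Kk * (dist (θ, x) (θ', x') + (W1 r r').toReal) := by
  rw [(hk.hasGradientAt_qdens θ r x).gradient, (hk.hasGradientAt_qdens θ' r' x').gradient]
  simpa [Real.coe_toNNReal _ hKk] using
    norm_integral_sub_integral_le_of_lipschitzWith
      (G := fun (p : Esp dθ × Esp dx) z => gradient (fun y => k p.1 y z) p.2)
      hk.lipschitzWith_gradient_uncurry.comp_prodMk_prodMk_right
      (fun p => hk.lipschitzWith_gradient_uncurry.comp_prodMk_prodMk_left p.1 p.2)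
      (fun p => hk.norm_gradient_le p.1 p.2) hW (θ, x) (θ', x')

lemma norm_gammaDrift_le (hk : IsRegularKernel k Bk Kk) {γ : ℝ} (hγ : 0 < γ)
    (φ : Esp dθ → Esp dz → Esp dx → Esp dx) (θ : Esp dθ) (r : Measure (Esp dz))
    [IsProbabilityMeasure r] (z : Esp dz) (ε : Esp dx) :
    ‖GammaDrift γ k φ θ r z ε‖ ≤ Bk / γ := by
  rw [GammaDrift, norm_smul, Real.norm_of_nonneg (by positivity)]
  refine (mul_le_mul (div_add_sq_le_inv hγ (hk.qdens_nonneg θ r _))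
    (hk.norm_gradient_qdens_le θ r _) (norm_nonneg _) (by positivity)).trans_eq ?_
  ring

lemma norm_gammaDrift_sub_le (hk : IsRegularKernel k Bk Kk) {γ : ℝ} (hγ : 0 < γ)
    (hKk : 0 ≤ Kk) (φ : Esp dθ → Esp dz → Esp dx → Esp dx) {r r' : Measure (Esp dz)}
    [IsProbabilityMeasure r] [IsProbabilityMeasure r'] (hW : W1 r r' ≠ ⊤) (θ θ' : Esp dθ)
    (z z' : Esp dz) (ε : Esp dx) :
    ‖GammaDrift γ k φ θ r z ε - GammaDrift γ k φ θ' r' z' ε‖ ≤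
      (Kk / γ + 2 * Bk ^ 2 / γ ^ 2) *
        (dist (θ, φ θ z ε) (θ', φ θ' z' ε) + (W1 r r').toReal) := by
  set D := dist (θ, φ θ z ε) (θ', φ θ' z' ε) + (W1 r r').toReal
  have hBk := hk.bound_nonneg
  have hq := hk.abs_qdens_sub_le hW θ θ' (φ θ z ε) (φ θ' z' ε)
  have hgrad := hk.norm_gradient_qdens_sub_le hKk hW θ θ' (φ θ z ε) (φ θ' z' ε)
  have hv := hk.norm_gradient_qdens_le θ' r' (φ θ' z' ε)
  refine (norm_smul_div_add_sq_sub_smul_div_add_sq_le hγ (hk.qdens_nonneg θ r _)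
    (hk.qdens_nonneg θ' r' _) _ _).trans ?_
  calc _ ≤ γ⁻¹ * (Kk * D) + 2 / γ ^ 2 * (Bk * D) * Bk := by gcongr
    _ = (Kk / γ + 2 * Bk ^ 2 / γ ^ 2) * D := by ring

end IsRegularKernel

theorem gamma_drift_bounded_and_lipschitz_general {dθ dx dz : ℕ} (γ : ℝ) (hγ : 0 < γ)
    (Bk Kk : ℝ) (hKk : 0 < Kk)
    (k : Esp dθ → Esp dx → Esp dz → ℝ)
    (hk_nonneg : ∀ θ x z, 0 ≤ k θ x z)
    (hk_diff : Differentiable ℝ (fun q : Esp dθ × Esp dx × Esp dz => k q.1 q.2.1 q.2.2))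
    (hk_bdd : ∀ (θ : Esp dθ) (x : Esp dx) (z : Esp dz),
      k θ x z + ‖fderiv ℝ (fun q : Esp dθ × Esp dx × Esp dz => k q.1 q.2.1 q.2.2) (θ, x, z)‖ ≤ Bk)
    (hk_gradlip : ∀ (θ θ' : Esp dθ) (x x' : Esp dx) (z z' : Esp dz),
      ‖gradient (fun y => k θ y z) x - gradient (fun y => k θ' y z') x'‖ ≤
        Kk * ‖((θ, x, z) : Esp dθ × Esp dx × Esp dz) - (θ', x', z')‖)
    (φ : Esp dθ → Esp dz → Esp dx → Esp dx)
    (aφ bφ : ℝ) (haφ : 0 ≤ aφ) (hbφ : 0 < bφ)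
    (hφ_diff : ∀ ε, Differentiable ℝ (fun q : Esp dθ × Esp dz => φ q.1 q.2 ε))
    (hφ_bdd : ∀ (θ : Esp dθ) (z : Esp dz) (ε : Esp dx),
      ‖fderiv ℝ (fun q : Esp dθ × Esp dz => φ q.1 q.2 ε) (θ, z)‖ ≤ aφ * ‖ε‖ + bφ) :
    (∀ (θ : Esp dθ) (z : Esp dz) (ε : Esp dx) (r : Measure (Esp dz)),
      IsProbabilityMeasure r → ‖GammaDrift γ k φ θ r z ε‖ ≤ Bk / γ) ∧
    (∃ aΓ bΓ : ℝ, 0 < aΓ ∧ 0 < bΓ ∧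
      ∀ (θ θ' : Esp dθ) (z z' : Esp dz) (ε : Esp dx)
        (r r' : Measure (Esp dz)),
        IsProbabilityMeasure r → IsProbabilityMeasure r' →
        (∫⁻ w, (‖w‖₊ : ℝ≥0∞) ∂r) < ⊤ → (∫⁻ w, (‖w‖₊ : ℝ≥0∞) ∂r') < ⊤ →
        ‖GammaDrift γ k φ θ r z ε - GammaDrift γ k φ θ' r' z' ε‖ ≤
          (aΓ * ‖ε‖ + bΓ) * (‖((θ, z) : Esp dθ × Esp dz) - (θ', z')‖ + (W1 r r').toReal)) := by
  have hk : IsRegularKernel k Bk Kk := ⟨hk_nonneg, hk_diff, hk_bdd, hk_gradlip⟩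
  set C := Kk / γ + 2 * Bk ^ 2 / γ ^ 2
  refine ⟨fun θ z ε r _ => hk.norm_gammaDrift_le hγ φ θ r z ε,
    C * (aφ + 1), C * (bφ + 1), by positivity, by positivity, ?_⟩
  intro θ θ' z z' ε r r' _ _ hr hr'
  set Δ := ‖((θ, z) : Esp dθ × Esp dz) - (θ', z')‖
  set W := (W1 r r').toReal
  have hx : dist (θ, φ θ z ε) (θ', φ θ' z' ε) ≤ (aφ * ‖ε‖ + bφ + 1) * Δ :=
    dist_prodMk_le_of_norm_fderiv_le (φ := (φ · · ε)) (hφ_diff ε)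
      (fun q => hφ_bdd q.1 q.2 ε) θ θ' z z'
  have hW : 0 ≤ W := ENNReal.toReal_nonneg
  have hM : 0 ≤ aφ * ‖ε‖ + bφ := by positivity
  have hCε : 0 ≤ C * ‖ε‖ := by positivity
  calc ‖GammaDrift γ k φ θ r z ε - GammaDrift γ k φ θ' r' z' ε‖
      ≤ C * (dist (θ, φ θ z ε) (θ', φ θ' z' ε) + W) :=
        hk.norm_gammaDrift_sub_le hγ hKk.le φ (W1_ne_top hr hr') θ θ' z z' ε
    _ ≤ C * ((aφ * ‖ε‖ + bφ + 1) * (Δ + W)) := by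
        rw [mul_add (aφ * ‖ε‖ + bφ + 1)]
        gcongr
        exact le_mul_of_one_le_left hW (by linarith)
    _ ≤ (C * (aφ + 1) * ‖ε‖ + C * (bφ + 1)) * (Δ + W) := by
        rw [← mul_assoc]
        gcongr ?_ * _
        linarith

/-- Boundedness and Lipschitz continuity of `Γ^γ_{θ,r}`: under kernel and reparameterization
regularity, `‖Γ^γ_{θ,r}(z,ε)‖ ≤ B_k/γ`, and there are `a_Γ, b_Γ > 0` with
`‖Γ^γ_{θ,r}(z,ε) − Γ^γ_{θ',r'}(z',ε)‖ ≤ (a_Γ‖ε‖ + b_Γ)(‖(θ,z) − (θ',z')‖ + W₁(r, r'))`. -/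
theorem gamma_drift_bounded_and_lipschitz {dθ dx dz : ℕ} (γ : ℝ) (hγ : 0 < γ)
    (Bk Kk : ℝ) (hBk : 0 < Bk) (hKk : 0 < Kk)
    (k : Esp dθ → Esp dx → Esp dz → ℝ)
    (hk_nonneg : ∀ θ x z, 0 ≤ k θ x z)
    (hk_diff : Differentiable ℝ (fun q : Esp dθ × Esp dx × Esp dz => k q.1 q.2.1 q.2.2))
    (hk_bdd : ∀ (θ : Esp dθ) (x : Esp dx) (z : Esp dz),
      k θ x z + ‖fderiv ℝ (fun q : Esp dθ × Esp dx × Esp dz => k q.1 q.2.1 q.2.2) (θ, x, z)‖ ≤ Bk)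
    (hk_gradlip : ∀ (θ θ' : Esp dθ) (x x' : Esp dx) (z z' : Esp dz),
      ‖gradient (fun y => k θ y z) x - gradient (fun y => k θ' y z') x'‖ ≤
        Kk * ‖((θ, x, z) : Esp dθ × Esp dx × Esp dz) - (θ', x', z')‖)
    (φ : Esp dθ → Esp dz → Esp dx → Esp dx)
    (aφ bφ : ℝ) (haφ : 0 ≤ aφ) (hbφ : 0 < bφ)
    (hφ_diff : ∀ ε, Differentiable ℝ (fun q : Esp dθ × Esp dz => φ q.1 q.2 ε))
    (hφ_bdd : ∀ (θ : Esp dθ) (z : Esp dz) (ε : Esp dx),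
      ‖fderiv ℝ (fun q : Esp dθ × Esp dz => φ q.1 q.2 ε) (θ, z)‖ ≤ aφ * ‖ε‖ + bφ) :
    (∀ (θ : Esp dθ) (z : Esp dz) (ε : Esp dx) (r : Measure (Esp dz)),
      IsProbabilityMeasure r → ‖GammaDrift γ k φ θ r z ε‖ ≤ Bk / γ) ∧
    (∃ aΓ bΓ : ℝ, 0 < aΓ ∧ 0 < bΓ ∧
      ∀ (θ θ' : Esp dθ) (z z' : Esp dz) (ε : Esp dx)
        (r r' : Measure (Esp dz)),
        IsProbabilityMeasure r → IsProbabilityMeasure r' →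
        (∫⁻ w, (‖w‖₊ : ℝ≥0∞) ∂r) < ⊤ → (∫⁻ w, (‖w‖₊ : ℝ≥0∞) ∂r') < ⊤ →
        ‖GammaDrift γ k φ θ r z ε - GammaDrift γ k φ θ' r' z' ε‖ ≤
          (aΓ * ‖ε‖ + bΓ) * (‖((θ, z) : Esp dθ × Esp dz) - (θ', z')‖ + (W1 r r').toReal)) :=
  gamma_drift_bounded_and_lipschitz_general γ hγ Bk Kk hKk k hk_nonneg hk_diff hk_bdd hk_gradlip φ
    aφ bφ haφ hbφ hφ_diff hφ_bdd
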